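/- Let $b, m \in \mathbb{R}$ with $m \geq 0$, let $z \sim \mathcal{N}(0,1)$, and define $w = 1/(1 + e^{bz+m})$. Then $\frac{1}{1+e^{m}} \leq \mathbb{E}[w] \leq \min\left\{\frac{1}{2}, \frac{2}{3 + e^{m - b^2/2}}\right\}$. -/

import Mathlib

/-!
Since `z` and `-z` have the same law, `2 𝔼[w]` is the mean of `w(z) + w(-z)`, which is a rational
function of `a = e^m ≥ 1` and `x = cosh (b z) ≥ 1`. That function lies between `2 / (1 + a)` and `1`,
and below the concave function `4x / (3x + a)`; Jensen's inequality with
`𝔼[cosh (b z)] = e^{b²/2}` then gives the last bound.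
-/

open MeasureTheory ProbabilityTheory Real
open scoped NNReal

section Gaussian

variable (v : ℝ≥0)

lemma map_neg_gaussianReal_zero :
    (gaussianReal 0 v).map (MeasurableEquiv.neg ℝ) = gaussianReal 0 v := by
  simpa using gaussianReal_map_neg (μ := 0) (v := v)

lemma integral_comp_neg_gaussianReal (f : ℝ → ℝ) :
    ∫ z, f (-z) ∂gaussianReal 0 v = ∫ z, f z ∂gaussianReal 0 v := by
  conv_rhs => rw [← map_neg_gaussianReal_zero]
  exact (integral_map_equiv (MeasurableEquiv.neg ℝ) f).symm

lemma MeasureTheory.Integrable.comp_neg_gaussianReal {v : ℝ≥0} {f : ℝ → ℝ}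
    (hf : Integrable f (gaussianReal 0 v)) : Integrable (fun z ↦ f (-z)) (gaussianReal 0 v) := by
  rw [← map_neg_gaussianReal_zero] at hf
  exact (integrable_map_equiv (MeasurableEquiv.neg ℝ) f).mp hf

lemma two_mul_integral_eq_integral_add_comp_neg {f : ℝ → ℝ}
    (hf : Integrable f (gaussianReal 0 v)) :
    2 * ∫ z, f z ∂gaussianReal 0 v = ∫ z, (f z + f (-z)) ∂gaussianReal 0 v := by
  rw [integral_add hf hf.comp_neg_gaussianReal, integral_comp_neg_gaussianReal, two_mul]

lemma integrable_cosh_mul_gaussianReal (μ : ℝ) (c : ℝ) :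
    Integrable (fun z ↦ cosh (c * z)) (gaussianReal μ v) := by
  simp_rw [cosh_eq, ← neg_mul]
  exact ((integrable_exp_mul_gaussianReal c).add
    (integrable_exp_mul_gaussianReal (-c))).div_const 2

lemma integral_cosh_mul_gaussianReal (c : ℝ) :
    ∫ z, cosh (c * z) ∂gaussianReal 0 v = exp (v * c ^ 2 / 2) := by
  simp_rw [cosh_eq, ← neg_mul]
  rw [integral_div, integral_add (integrable_exp_mul_gaussianReal c)
    (integrable_exp_mul_gaussianReal (-c))]
  have hmgf := congrFun (mgf_fun_id_gaussianReal (μ := 0) (v := v))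
  simp only [mgf] at hmgf
  rw [hmgf, hmgf]
  simp only [zero_mul, zero_add, neg_sq]
  ring

end Gaussian

lemma integrable_inv_one_add_exp {α : Type*} [MeasurableSpace α] {μ : Measure α}
    [IsFiniteMeasure μ] {g : α → ℝ} (hg : Measurable g) :
    Integrable (fun x ↦ (1 + exp (g x))⁻¹) μ := by
  refine .of_bound (by fun_prop) 1 (ae_of_all _ fun x ↦ ?_)
  rw [norm_inv, Real.norm_of_nonneg (by positivity)]
  exact inv_le_one_of_one_le₀ (by linarith [exp_pos (g x)])

noncomputable def pairedSigmoid (a x : ℝ) : ℝ := 2 * (1 + a * x) / (1 + 2 * a * x + a ^ 2)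

lemma inv_one_add_exp_add_inv_one_add_exp_neg (t m : ℝ) :
    (1 + exp (t + m))⁻¹ + (1 + exp (-t + m))⁻¹ = pairedSigmoid (exp m) (cosh t) := by
  rw [pairedSigmoid, exp_add, exp_add, cosh_eq, exp_neg]
  field_simp
  ring

section PairedSigmoid

variable {a x : ℝ}

lemma two_div_one_add_le_pairedSigmoid (ha : 1 ≤ a) (hx : 1 ≤ x) :
    2 / (1 + a) ≤ pairedSigmoid a x := by
  rw [pairedSigmoid, div_le_div_iff₀ (by positivity) (by positivity)]
  nlinarith [mul_nonneg (mul_nonneg (by linarith : 0 ≤ a) (sub_nonneg.2 ha)) (sub_nonneg.2 hx)]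

lemma pairedSigmoid_le_one (ha : 1 ≤ a) (hx : 0 ≤ x) : pairedSigmoid a x ≤ 1 := by
  rw [pairedSigmoid, div_le_one (by positivity)]
  nlinarith

lemma pairedSigmoid_le_four_mul_div (ha : 1 ≤ a) (hx : 1 ≤ x) :
    pairedSigmoid a x ≤ 4 * x / (3 * x + a) := by
  rw [pairedSigmoid, div_le_div_iff₀ (by positivity) (by positivity)]
  nlinarith [mul_nonneg (by linarith : 0 ≤ a) (by nlinarith : 0 ≤ x ^ 2 - 1),
    mul_nonneg (by linarith : 0 ≤ x) (by nlinarith : 0 ≤ a ^ 2 - 1)]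

lemma four_mul_div_le_tangent {x₀ : ℝ} (ha : 0 < a) (hx : 0 ≤ x) (hx₀ : 0 < x₀) :
    4 * x / (3 * x + a) ≤ 4 * x₀ / (3 * x₀ + a) + 4 * a / (3 * x₀ + a) ^ 2 * (x - x₀) := by
  have e : 4 * x₀ / (3 * x₀ + a) + 4 * a / (3 * x₀ + a) ^ 2 * (x - x₀)
      = (4 * x₀ * (3 * x₀ + a) + 4 * a * (x - x₀)) / (3 * x₀ + a) ^ 2 := by
    field_simp
  rw [e, div_le_div_iff₀ (by positivity) (by positivity)]
  nlinarith [mul_nonneg ha.le (sq_nonneg (x - x₀))]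

end PairedSigmoid

section Integrals

variable (v : ℝ≥0) (b m : ℝ)

lemma two_mul_integral_inv_one_add_exp :
    2 * ∫ z, (1 + exp (b * z + m))⁻¹ ∂gaussianReal 0 v
      = ∫ z, pairedSigmoid (exp m) (cosh (b * z)) ∂gaussianReal 0 v := by
  rw [two_mul_integral_eq_integral_add_comp_neg v (integrable_inv_one_add_exp (by fun_prop))]
  simp only [mul_neg, inv_one_add_exp_add_inv_one_add_exp_neg]

lemma integrable_pairedSigmoid_cosh :
    Integrable (fun z ↦ pairedSigmoid (exp m) (cosh (b * z))) (gaussianReal 0 v) := by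
  have hf : Integrable (fun z ↦ (1 + exp (b * z + m))⁻¹) (gaussianReal 0 v) :=
    integrable_inv_one_add_exp (by fun_prop)
  simpa only [Pi.add_def, mul_neg, inv_one_add_exp_add_inv_one_add_exp_neg]
    using hf.add hf.comp_neg_gaussianReal

/-- The tangent line is taken at `x₀ = 𝔼[cosh (b z)]`, so its affine part integrates to zero. -/
lemma integral_pairedSigmoid_cosh_le (hm : 0 ≤ m) :
    ∫ z, pairedSigmoid (exp m) (cosh (b * z)) ∂gaussianReal 0 v
      ≤ 4 * exp (v * b ^ 2 / 2) / (3 * exp (v * b ^ 2 / 2) + exp m) := by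
  set a := exp m
  set x₀ := exp (v * b ^ 2 / 2)
  have hcosh_sub : Integrable (fun z ↦ cosh (b * z) - x₀) (gaussianReal 0 v) :=
    (integrable_cosh_mul_gaussianReal v 0 b).sub (integrable_const x₀)
  have hT : Integrable (fun z ↦ 4 * x₀ / (3 * x₀ + a) + 4 * a / (3 * x₀ + a) ^ 2 *
      (cosh (b * z) - x₀)) (gaussianReal 0 v) :=
    (integrable_const _).add (hcosh_sub.const_mul _)
  refine (integral_mono (integrable_pairedSigmoid_cosh v b m) hT fun z ↦
    (pairedSigmoid_le_four_mul_div (one_le_exp hm) (one_le_cosh _)).trans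
    (four_mul_div_le_tangent (by positivity) (cosh_pos _).le (exp_pos _))).trans_eq ?_
  rw [integral_add (integrable_const _) (hcosh_sub.const_mul _), integral_const_mul,
    integral_sub (integrable_cosh_mul_gaussianReal v 0 b) (integrable_const _),
    integral_cosh_mul_gaussianReal]
  simp [x₀]

end Integrals

theorem stmt0 (b m : ℝ) (hm : 0 ≤ m) :
    1 / (1 + Real.exp m) ≤
      (∫ z, (1 + Real.exp (b * z + m))⁻¹ ∂(gaussianReal 0 1)) ∧
    (∫ z, (1 + Real.exp (b * z + m))⁻¹ ∂(gaussianReal 0 1)) ≤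
      min (1 / 2) (2 / (3 + Real.exp (m - b ^ 2 / 2))) := by
  have ha : 1 ≤ exp m := one_le_exp hm
  have hI := two_mul_integral_inv_one_add_exp 1 b m
  have hF := integrable_pairedSigmoid_cosh 1 b m
  have hlow : 2 / (1 + exp m) ≤ 2 * ∫ z, (1 + exp (b * z + m))⁻¹ ∂gaussianReal 0 1 := by
    simpa [hI] using integral_mono (integrable_const _) hF
      fun z ↦ two_div_one_add_le_pairedSigmoid ha (one_le_cosh (b * z))
  have hhalf : 2 * ∫ z, (1 + exp (b * z + m))⁻¹ ∂gaussianReal 0 1 ≤ 1 := by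
    simpa [hI] using integral_mono hF (integrable_const _)
      fun z ↦ pairedSigmoid_le_one ha (cosh_pos (b * z)).le
  have htangent := hI ▸ integral_pairedSigmoid_cosh_le 1 b m hm
  have hbound : 2 / (3 + exp (m - b ^ 2 / 2))
      = 4 * exp (b ^ 2 / 2) / (3 * exp (b ^ 2 / 2) + exp m) / 2 := by
    rw [exp_sub]
    field_simp
    ring
  refine ⟨by linarith [show 2 / (1 + exp m) = 2 * (1 / (1 + exp m)) by ring],
    le_min (by linarith) ?_⟩
  rw [hbound]
  simp only [NNReal.coe_one, one_mul] at htangent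
  linarith
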